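/- arXiv:2203.13921 — 3 statements merged into one kernel-verified Lean document; each statement's English description precedes it below -/
import Mathlib

section
/- Let A be a finite nonempty set with functions Acc : A → ℝ (accuracy), and for hardware choices h1, h2 functions L1, L2 : A → ℝ (latency) and E1, E2 : A → ℝ (energy) such that L1 and L2 are rank-equivalent and E1 and E2 are rank-equivalent. Define the optimal-architecture family of h1 as the set of all subsets argmax over {a : L1(a) ≤ ℓ, E1(a) ≤ e} of Acc, ranging over all ℓ, e ∈ ℝ for which this constraint set is nonempty; similarly for h2. Then every optimal architecture for h1 under some latency/energy constraint pair is also an optimal architecture for h2 under some (possibly different) latency/energy constraint pair. -/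
theorem stmt_1 {A : Type*} [Fintype A] [Nonempty A]
    (Acc L1 L2 E1 E2 : A → ℝ)
    (hL : ∀ a b : A, L1 a ≤ L1 b ↔ L2 a ≤ L2 b)
    (hE : ∀ a b : A, E1 a ≤ E1 b ↔ E2 a ≤ E2 b) :
    ∀ (a : A) (ℓ e : ℝ),
      (L1 a ≤ ℓ ∧ E1 a ≤ e ∧ ∀ b : A, L1 b ≤ ℓ → E1 b ≤ e → Acc b ≤ Acc a) →
      ∃ ℓ' e' : ℝ,
        L2 a ≤ ℓ' ∧ E2 a ≤ e' ∧ ∀ b : A, L2 b ≤ ℓ' → E2 b ≤ e' → Acc b ≤ Acc a := by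
  rintro a ℓ e ⟨hLa, hEa, hopt⟩
  obtain ⟨c, hc, hcmax⟩ := (Finset.univ.filter (fun b => L1 b ≤ ℓ)).exists_max_image L2
    ⟨a, by simp [hLa]⟩
  obtain ⟨d, hd, hdmax⟩ := (Finset.univ.filter (fun b => E1 b ≤ e)).exists_max_image E2
    ⟨a, by simp [hEa]⟩
  simp only [Finset.mem_filter, Finset.mem_univ, true_and] at hc hd hcmax hdmax
  refine ⟨L2 c, E2 d, hcmax a hLa, hdmax a hEa, fun b hb1 hb2 => ?_⟩
  exact hopt b (le_trans ((hL b c).2 hb1) hc) (le_trans ((hE b d).2 hb2) hd)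
end

section
/- Let A be a finite nonempty set with Acc : A → ℝ and two pairs of rank-equivalent functions L1 ~ L2 and E1 ~ E2 on A. Define the Pareto front of hardware h as the set of a ∈ A such that no b ∈ A satisfies L_h(b) ≤ L_h(a), E_h(b) ≤ E_h(a), Acc(b) ≥ Acc(a) with at least one inequality strict. Then the Pareto front with respect to (L1, E1, Acc) equals the Pareto front with respect to (L2, E2, Acc). -/
/-- `b` strictly dominates `a` w.r.t. latency `L`, energy `E` and accuracy `Acc`. -/
def Dominates {A : Type*} (L E Acc : A → ℝ) (b a : A) : Prop :=
  L b ≤ L a ∧ E b ≤ E a ∧ Acc a ≤ Acc b ∧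
    (L b < L a ∨ E b < E a ∨ Acc a < Acc b)

theorem dominates_congr {A : Type*} {L L' E E' Acc : A → ℝ}
    (hL : ∀ a b : A, L a ≤ L b ↔ L' a ≤ L' b)
    (hE : ∀ a b : A, E a ≤ E b ↔ E' a ≤ E' b) (b a : A) :
    Dominates L E Acc b a ↔ Dominates L' E' Acc b a := by
  unfold Dominates
  rw [hL, hE, lt_iff_lt_of_le_iff_le (hL a b), lt_iff_lt_of_le_iff_le (hE a b)]

theorem stmt_2_general {A : Type*}
    (Acc L1 L2 E1 E2 : A → ℝ)
    (hL : ∀ a b : A, L1 a ≤ L1 b ↔ L2 a ≤ L2 b)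
    (hE : ∀ a b : A, E1 a ≤ E1 b ↔ E2 a ≤ E2 b) :
    {a : A | ¬ ∃ b : A, Dominates L1 E1 Acc b a} =
      {a : A | ¬ ∃ b : A, Dominates L2 E2 Acc b a} := by
  simp only [dominates_congr hL hE]

theorem stmt_2 {A : Type*} [Fintype A] [Nonempty A]
    (Acc L1 L2 E1 E2 : A → ℝ)
    (hL : ∀ a b : A, L1 a ≤ L1 b ↔ L2 a ≤ L2 b)
    (hE : ∀ a b : A, E1 a ≤ E1 b ↔ E2 a ≤ E2 b) :
    {a : A | ¬ ∃ b : A, Dominates L1 E1 Acc b a} =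
      {a : A | ¬ ∃ b : A, Dominates L2 E2 Acc b a} :=
  stmt_2_general Acc L1 L2 E1 E2 hL hE
end

section
/- Let A be a finite set of size n ≥ 2 and r, s : A → Fin n bijections. With SRCC defined as 1 − 6·Σ (r(a) − s(a))² / (n(n²−1)), we have −1 ≤ SRCC(r, s) ≤ 1, and SRCC(r, s) = −1 if and only if s(a) = n − 1 − r(a) for all a ∈ A. -/
/-!
With `m = n - 1`, the identity `2 ((x - y)² + (x + y - m)²) = (2x - m)² + (2y - m)²` shows that
`Σ (r a - s a)² + Σ (r a + s a - m)²` is half of `Σ (2 r a - m)² + Σ (2 s a - m)²`; as `r` and `s`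
are bijections onto `{0, …, m}`, it equals `Σ_{i < n} (2i - m)² = n (n² - 1) / 3`.
Both sums are nonnegative, so `0 ≤ 6 Σ (r a - s a)² ≤ 2 n (n² - 1)`, with equality
on the right exactly when every `r a + s a - m` vanishes.
-/

open Finset

theorem three_mul_sum_range_sq_two_mul_sub (n : ℕ) (m : ℤ) :
    3 * ∑ i ∈ range n, (2 * (i : ℤ) - m) ^ 2 =
      2 * n * (n - 1) * (2 * n - 1) - 6 * m * n * (n - 1) + 3 * n * m ^ 2 := by
  induction n with
  | zero => simp
  | succ k ih =>
    rw [sum_range_succ, mul_add, ih]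
    push_cast
    ring

theorem three_mul_sum_sq_rank_sub_add_sum_sq_rank_add_sub {A : Type*} [Fintype A] {n : ℕ}
    {r s : A → Fin n} (hr : Function.Bijective r) (hs : Function.Bijective s) :
    3 * (∑ a, ((r a : ℤ) - s a) ^ 2 + ∑ a, ((r a : ℤ) + s a - (n - 1)) ^ 2) =
      n * ((n : ℤ) ^ 2 - 1) := by
  have centered {t : A → Fin n} (ht : Function.Bijective t) :
      ∑ a, (2 * (t a : ℤ) - (n - 1)) ^ 2 = ∑ i ∈ range n, (2 * (i : ℤ) - (n - 1)) ^ 2 := by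
    rw [← Fin.sum_univ_eq_sum_range]
    exact ht.sum_comp fun i : Fin n ↦ (2 * (i : ℤ) - (n - 1)) ^ 2
  have polarize : 2 * (∑ a, ((r a : ℤ) - s a) ^ 2 + ∑ a, ((r a : ℤ) + s a - (n - 1)) ^ 2) =
      ∑ a, (2 * (r a : ℤ) - (n - 1)) ^ 2 + ∑ a, (2 * (s a : ℤ) - (n - 1)) ^ 2 := by
    simp only [mul_add, mul_sum, ← sum_add_distrib]
    exact sum_congr rfl fun a _ ↦ by ring
  rw [centered hr, centered hs] at polarize
  have total := three_mul_sum_range_sq_two_mul_sub n (n - 1)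
  linarith

theorem one_sub_six_mul_div_bounds {S D : ℝ} (hD : 0 < D) (hS : 0 ≤ S) (hSD : 3 * S ≤ D) :
    -1 ≤ 1 - 6 * S / D ∧ 1 - 6 * S / D ≤ 1 ∧ (1 - 6 * S / D = -1 ↔ 3 * S = D) := by
  have h6 : 6 * S / D = 2 ↔ 3 * S = D := by
    rw [div_eq_iff hD.ne']
    constructor <;> intro h <;> linarith
  refine ⟨?_, ?_, by rw [← h6]; constructor <;> intro h <;> linarith⟩
  · have : 6 * S / D ≤ 2 := by rw [div_le_iff₀ hD]; linarith
    linarith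
  · have : 0 ≤ 6 * S / D := by positivity
    linarith

theorem stmt_8_general {A : Type*} [Fintype A] (n : ℕ) (hn : 2 ≤ n)
    (r s : A → Fin n) (hr : Function.Bijective r) (hs : Function.Bijective s) :
    (-1 ≤ 1 - 6 * ((∑ a : A, ((r a : ℤ) - (s a : ℤ)) ^ 2 : ℤ) : ℝ) /
        ((n : ℝ) * ((n : ℝ) ^ 2 - 1))) ∧
    (1 - 6 * ((∑ a : A, ((r a : ℤ) - (s a : ℤ)) ^ 2 : ℤ) : ℝ) /
        ((n : ℝ) * ((n : ℝ) ^ 2 - 1)) ≤ 1) ∧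
    ((1 - 6 * ((∑ a : A, ((r a : ℤ) - (s a : ℤ)) ^ 2 : ℤ) : ℝ) /
        ((n : ℝ) * ((n : ℝ) ^ 2 - 1)) = -1) ↔
      ∀ a : A, (s a : ℤ) = (n : ℤ) - 1 - (r a : ℤ)) := by
  set S : ℤ := ∑ a, ((r a : ℤ) - s a) ^ 2
  set G : ℤ := ∑ a, ((r a : ℤ) + s a - (n - 1)) ^ 2
  have identity : 3 * ((S : ℝ) + G) = n * ((n : ℝ) ^ 2 - 1) := by
    have h := congrArg (Int.cast (R := ℝ)) (three_mul_sum_sq_rank_sub_add_sum_sq_rank_add_sub hr hs)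
    simpa only [Int.cast_mul, Int.cast_add, Int.cast_sub, Int.cast_pow, Int.cast_natCast,
      Int.cast_ofNat, Int.cast_one] using h
  have hS : (0 : ℝ) ≤ S := Int.cast_nonneg (sum_nonneg fun _ _ ↦ sq_nonneg _)
  have hG : (0 : ℝ) ≤ G := Int.cast_nonneg (sum_nonneg fun _ _ ↦ sq_nonneg _)
  have hD : (0 : ℝ) < n * ((n : ℝ) ^ 2 - 1) := by
    have : (2 : ℝ) ≤ n := by exact_mod_cast hn
    nlinarith
  obtain ⟨lower, upper, extremal⟩ := one_sub_six_mul_div_bounds hD hS (by linarith)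
  refine ⟨lower, upper, extremal.trans ?_⟩
  calc 3 * (S : ℝ) = n * ((n : ℝ) ^ 2 - 1) ↔ G = 0 := by
        rw [← Int.cast_eq_zero (α := ℝ)]
        constructor <;> intro h <;> linarith
    _ ↔ ∀ a, (s a : ℤ) = n - 1 - r a := by
        rw [sum_eq_zero_iff_of_nonneg fun _ _ ↦ sq_nonneg _]
        simp only [mem_univ, true_implies, sq_eq_zero_iff]
        exact forall_congr' fun a ↦ by constructor <;> intro h <;> linarith

theorem stmt_8 {A : Type*} [Fintype A] (n : ℕ) (hn : 2 ≤ n)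
    (hcard : Fintype.card A = n)
    (r s : A → Fin n) (hr : Function.Bijective r) (hs : Function.Bijective s) :
    (-1 ≤ 1 - 6 * ((∑ a : A, ((r a : ℤ) - (s a : ℤ)) ^ 2 : ℤ) : ℝ) /
        ((n : ℝ) * ((n : ℝ) ^ 2 - 1))) ∧
    (1 - 6 * ((∑ a : A, ((r a : ℤ) - (s a : ℤ)) ^ 2 : ℤ) : ℝ) /
        ((n : ℝ) * ((n : ℝ) ^ 2 - 1)) ≤ 1) ∧
    ((1 - 6 * ((∑ a : A, ((r a : ℤ) - (s a : ℤ)) ^ 2 : ℤ) : ℝ) /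
        ((n : ℝ) * ((n : ℝ) ^ 2 - 1)) = -1) ↔
      ∀ a : A, (s a : ℤ) = (n : ℤ) - 1 - (r a : ℤ)) :=
  stmt_8_general n hn r s hr hs
end
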